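/- arXiv:0906.0641 — 3 statements merged into one kernel-verified Lean document; each statement's English description precedes it below -/
import Mathlib

section
/- Assume A is as above (quantum cohomology of the cubic threefold, generated by b = e₁ over ℂ[q]). Then the ℂ[q]-algebra homomorphism ℂ[b,q] → A sending b to e₁ is surjective with kernel the ideal (b⁴ − 27qb²), i.e. A ≅ ℂ[b,q]/(b⁴ − 27qb²). -/
open Polynomial

/-!
The four quantum relations show that `1, b, b², b³` is obtained from the basis `e` by a
unitriangular change of coordinates (`b² = e₂ + 6q`, `b³ = e₃ + 21q b`), so the powers of `b`
span `A`; being as many as the rank of the free module `A`, they form a basis. Surjectivity is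
then clear, and `b⁴ = 27q b²` gives a monic quartic relation; by linear independence of the lower
powers, every polynomial killed by `b` has zero remainder modulo it.
-/

open Module Submodule

section PowersOfGenerator

variable {R A : Type*} [CommRing R] [Ring A] [Algebra R A] {b : A} {n : ℕ}

theorem Polynomial.eq_zero_of_aeval_eq_zero_of_linearIndependent_pow
    (hli : LinearIndependent R fun i : Fin n => b ^ (i : ℕ)) {p : R[X]} (hp : p.degree < n)
    (hpb : aeval b p = 0) : p = 0 := by
  by_contra hp0
  have hpn : p.natDegree < n := (natDegree_lt_iff_degree_lt hp0).2 hp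
  rw [aeval_eq_sum_range' hpn, ← Fin.sum_univ_eq_sum_range (fun i => p.coeff i • b ^ i)] at hpb
  have hcoeff := Fintype.linearIndependent_iff.1 hli (fun i => p.coeff i) hpb
  refine hp0 (Polynomial.ext fun k => ?_)
  rcases lt_or_ge k n with hk | hk
  · exact hcoeff ⟨k, hk⟩
  · exact coeff_eq_zero_of_natDegree_lt (hpn.trans_le hk)

theorem Polynomial.ker_aeval_eq_span_singleton_of_linearIndependent_pow {f : R[X]}
    (hf : f.Monic) (hfn : f.natDegree = n) (hfb : aeval b f = 0)
    (hli : LinearIndependent R fun i : Fin n => b ^ (i : ℕ)) :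
    RingHom.ker (aeval b : R[X] →ₐ[R] A) = Ideal.span {f} := by
  nontriviality R
  ext p
  rw [RingHom.mem_ker, Ideal.mem_span_singleton, ← modByMonic_eq_zero_iff_dvd hf,
    ← aeval_modByMonic_eq_self_of_root hfb]
  refine ⟨eq_zero_of_aeval_eq_zero_of_linearIndependent_pow hli ?_, fun h => by rw [h, map_zero]⟩
  exact hfn ▸ (degree_modByMonic_lt p hf).trans_le degree_le_natDegree

theorem Polynomial.aeval_surjective_of_top_le_span_pow
    (hspan : ⊤ ≤ span R (Set.range fun i : Fin n => b ^ (i : ℕ))) :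
    Function.Surjective (aeval b : R[X] →ₐ[R] A) := by
  have hle : span R (Set.range fun i : Fin n => b ^ (i : ℕ)) ≤
      LinearMap.range (aeval b : R[X] →ₐ[R] A).toLinearMap :=
    span_le.2 <| Set.range_subset_iff.2 fun i => ⟨X ^ (i : ℕ), by simp⟩
  exact fun a => hle (hspan trivial)

theorem Polynomial.aeval_surjective_and_ker_eq_span_singleton {f : R[X]} (hf : f.Monic)
    (hfn : f.natDegree = n) (hfb : aeval b f = 0) (hrank : finrank R A = n)
    (hspan : ⊤ ≤ span R (Set.range fun i : Fin n => b ^ (i : ℕ))) :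
    Function.Surjective (aeval b : R[X] →ₐ[R] A) ∧
      RingHom.ker (aeval b : R[X] →ₐ[R] A) = Ideal.span {f} :=
  ⟨aeval_surjective_of_top_le_span_pow hspan,
    ker_aeval_eq_span_singleton_of_linearIndependent_pow hf hfn hfb <|
      linearIndependent_of_top_le_span_of_card_eq_finrank hspan (by simp [hrank])⟩

end PowersOfGenerator

namespace CubicThreefold

variable {R A : Type*} [CommRing R] [CommRing A] [Algebra R A] {q : R}
  {e : Basis (Fin 4) R A} {b : A}
  (he0 : e 0 = 1) (he1 : e 1 = b)
  (h11 : b * b = e 2 + (6 * q) • e 0)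
  (h12 : b * e 2 = e 3 + (15 * q) • e 1)
  (h13 : b * e 3 = (6 * q) • e 2 + (36 * q ^ 2) • e 0)

include he0 h11 in
theorem pow_two_eq : b ^ 2 = e 2 + (6 * q) • 1 := by
  rw [sq, h11, he0]

include he0 he1 h11 h12

theorem pow_three_eq : b ^ 3 = e 3 + (21 * q) • b := by
  rw [pow_succ', pow_two_eq he0 h11, mul_add, mul_smul_comm, mul_one, h12, he1]
  module

theorem top_le_span_pow : ⊤ ≤ span R (Set.range fun i : Fin 4 => b ^ (i : ℕ)) := by
  have hpow (k : ℕ) (hk : k < 4) : b ^ k ∈ span R (Set.range fun i : Fin 4 => b ^ (i : ℕ)) :=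
    subset_span ⟨⟨k, hk⟩, rfl⟩
  have he (i : Fin 4) : e i ∈ span R (Set.range fun i : Fin 4 => b ^ (i : ℕ)) := by
    fin_cases i
    · simpa [he0] using hpow 0 (by norm_num)
    · simpa [he1] using hpow 1 (by norm_num)
    · show e 2 ∈ _
      have h2 : e 2 = b ^ 2 - (6 * q) • b ^ 0 := by
        rw [pow_two_eq he0 h11, pow_zero, add_sub_cancel_right]
      simpa only [h2] using sub_mem (hpow 2 (by norm_num)) (smul_mem _ _ (hpow 0 (by norm_num)))
    · show e 3 ∈ _
      have h3 : e 3 = b ^ 3 - (21 * q) • b ^ 1 := by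
        rw [pow_three_eq he0 he1 h11 h12, pow_one, add_sub_cancel_right]
      simpa only [h3] using sub_mem (hpow 3 (by norm_num)) (smul_mem _ _ (hpow 1 (by norm_num)))
  rw [← e.span_eq]
  exact span_le.2 (Set.range_subset_iff.2 he)

include h13 in
theorem pow_four_eq : b ^ 4 = (27 * q) • b ^ 2 := by
  rw [pow_succ', pow_three_eq he0 he1 h11 h12, mul_add, mul_smul_comm, h13, he0,
    ← he1, ← sq, he1, pow_two_eq he0 h11]
  module

end CubicThreefold

/-- let `A` be a commutative `ℂ[q]`-algebra which is free with basis
`e₀ = 1, e₁ = b, e₂, e₃` and quantum products `b·b = e₂ + 6q`, `b·e₂ = e₃ + 15q b`,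
`b·e₃ = 6q e₂ + 36q²` (the small quantum cohomology of the cubic threefold `M³₅`).
Then the `ℂ[q]`-algebra homomorphism `ℂ[b,q] → A`, `b ↦ e₁`, is surjective with kernel
the ideal `(b⁴ − 27 q b²)`, i.e. `A ≅ ℂ[b,q]/(b⁴ − 27qb²)`. -/
theorem stmt10 (A : Type*) [CommRing A] [Algebra (Polynomial ℂ) A]
    (e : Module.Basis (Fin 4) (Polynomial ℂ) A)
    (he0 : e 0 = 1) (b : A) (he1 : e 1 = b)
    (h11 : b * b = e 2 + ((6 * X : Polynomial ℂ)) • e 0)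
    (h12 : b * e 2 = e 3 + ((15 * X : Polynomial ℂ)) • e 1)
    (h13 : b * e 3 = ((6 * X : Polynomial ℂ)) • e 2 + ((36 * X ^ 2 : Polynomial ℂ)) • e 0) :
    Function.Surjective
      (Polynomial.aeval b : Polynomial (Polynomial ℂ) →ₐ[Polynomial ℂ] A) ∧
    RingHom.ker
        (Polynomial.aeval b : Polynomial (Polynomial ℂ) →ₐ[Polynomial ℂ] A)
      = Ideal.span {(X : Polynomial (Polynomial ℂ)) ^ 4 - C (27 * X) * X ^ 2} := by
  have hlow : (C (27 * X) * X ^ 2 : (Polynomial ℂ)[X]).degree < 4 := by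
    compute_degree!
  have hmonic : ((X : (Polynomial ℂ)[X]) ^ 4 - C (27 * X) * X ^ 2).Monic :=
    monic_X_pow_sub hlow
  refine aeval_surjective_and_ker_eq_span_singleton hmonic ?_ ?_ (finrank_eq_card_basis e)
    (CubicThreefold.top_le_span_pow he0 he1 h11 h12)
  · compute_degree!
  · rw [map_sub, map_mul, aeval_C, aeval_X_pow, aeval_X_pow, ← Algebra.smul_def,
      CubicThreefold.pow_four_eq he0 he1 h11 h12 h13, sub_self]
end

section
/- Let ℏ be a formal parameter and consider the 4×4 matrix ω(q) = [[0,6q,0,36q²],[1,0,15q,0],[0,1,0,6q],[0,0,1,0]] acting on column vectors over ℂ[q,ℏ], with the operator ℏ∂ acting by ℏ∂·v = ℏ q (dv/dq) + ω v. Then with e₀ the first standard basis vector: (ℏ∂)·e₀ = e₁, (ℏ∂)²·e₀ = 6q e₀ + e₂, (ℏ∂)³·e₀ = 6ℏq e₀ + 21q e₁ + e₃, and (ℏ∂)⁴·e₀ = (162q² + 6ℏ²q) e₀ + 27ℏq e₁ + 27q e₂. Consequently ((ℏ∂)⁴ − 27q(ℏ∂)² − 27ℏq(ℏ∂) − 6ℏ²q)·e₀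 = 0. -/
open MvPolynomial

/-- `ℂ[q,ℏ]` with `q = X 0`, `ℏ = X 1`. -/
abbrev Sqh : Type := MvPolynomial (Fin 2) ℂ

noncomputable def qv : Sqh := X 0
noncomputable def hv : Sqh := X 1

/-- The connection matrix `ω(q)` of the quantum differential equation of `M³₅`. -/
noncomputable def omegaM35 : Matrix (Fin 4) (Fin 4) Sqh :=
  !![0, 6 * qv, 0, 36 * qv ^ 2;
     1, 0, 15 * qv, 0;
     0, 1, 0, 6 * qv;
     0, 0, 1, 0]

/-- The operator `ℏ∂ : v ↦ ℏ q (dv/dq) + ω v` on column vectors over `ℂ[q,ℏ]`. -/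
noncomputable def hDel (v : Fin 4 → Sqh) : Fin 4 → Sqh :=
  fun j => hv * (qv * pderiv (0 : Fin 2) (v j)) + ∑ k : Fin 4, omegaM35 j k * v k

noncomputable def eV (i : Fin 4) : Fin 4 → Sqh := Pi.single i 1

lemma pderiv_ofNat (i : Fin 2) (n : ℕ) [n.AtLeastTwo] :
    pderiv i (no_index (OfNat.ofNat n) : MvPolynomial (Fin 2) ℂ) = 0 := by
  rw [show (OfNat.ofNat n : MvPolynomial (Fin 2) ℂ) = C (OfNat.ofNat n) by rw [map_ofNat]]
  simp

/-- for the quantum connection of the cubic threefold, with `e₀` the first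
standard basis vector: `ℏ∂·e₀ = e₁`, `(ℏ∂)²·e₀ = 6q e₀ + e₂`,
`(ℏ∂)³·e₀ = 6ℏq e₀ + 21q e₁ + e₃`, `(ℏ∂)⁴·e₀ = (162q² + 6ℏ²q) e₀ + 27ℏq e₁ + 27q e₂`,
and consequently `((ℏ∂)⁴ − 27q(ℏ∂)² − 27ℏq(ℏ∂) − 6ℏ²q)·e₀ = 0`. -/
theorem stmt11 :
    hDel (eV 0) = eV 1 ∧
    hDel (hDel (eV 0)) = (6 * qv) • eV 0 + eV 2 ∧
    hDel (hDel (hDel (eV 0))) = (6 * hv * qv) • eV 0 + (21 * qv) • eV 1 + eV 3 ∧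
    hDel (hDel (hDel (hDel (eV 0))))
      = (162 * qv ^ 2 + 6 * hv ^ 2 * qv) • eV 0 + (27 * hv * qv) • eV 1 + (27 * qv) • eV 2 ∧
    hDel (hDel (hDel (hDel (eV 0)))) - (27 * qv) • hDel (hDel (eV 0))
      - (27 * hv * qv) • hDel (eV 0) - (6 * hv ^ 2 * qv) • eV 0 = 0 := by
  have h1 : hDel (eV 0) = eV 1 := by
    funext j; fin_cases j <;>
      simp [hDel, omegaM35, eV, qv, hv, Fin.sum_univ_four, Pi.single_apply]
  have h2 : hDel (hDel (eV 0)) = (6 * qv) • eV 0 + eV 2 := by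
    rw [h1]; funext j; fin_cases j <;>
      simp [hDel, omegaM35, eV, qv, hv, Fin.sum_univ_four, Pi.single_apply]
  have h3 : hDel (hDel (hDel (eV 0))) = (6 * hv * qv) • eV 0 + (21 * qv) • eV 1 + eV 3 := by
    rw [h2]; funext j; fin_cases j <;>
      (simp [hDel, omegaM35, eV, qv, hv, Fin.sum_univ_four, Pi.single_apply, pderiv_X,
        pderiv_ofNat]; try ring)
  have h4 : hDel (hDel (hDel (hDel (eV 0))))
      = (162 * qv ^ 2 + 6 * hv ^ 2 * qv) • eV 0 + (27 * hv * qv) • eV 1 + (27 * qv) • eV 2 := by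
    rw [h3]; funext j; fin_cases j <;>
      (simp [hDel, omegaM35, eV, qv, hv, Fin.sum_univ_four, Pi.single_apply, pderiv_X,
        pderiv_ofNat]; try ring)
  refine ⟨h1, h2, h3, h4, ?_⟩
  rw [h4, h2, h1]
  funext j; fin_cases j <;>
    (simp [eV, qv, hv, Pi.single_apply]; try ring)
end

section
/- Let φ : U → GL_m(ℂ) be a smooth map on a simply connected open set U ⊆ ℂ² with coordinates (z₁, z₂), and for λ ∈ ℂ* set α(λ) = (1/2)(1 − 1/λ)(φ⁻¹∂₁φ) dz₁ + (1/2)(1 − λ)(φ⁻¹∂₂φ) dz₂. Then d + α(λ) is flat for every λ ∈ ℂ* if and only if φ satisfies both ∂₁(φ⁻¹∂₂φ) + ∂₂(φ⁻¹∂₁φ) = 0 and the flatness of d + φ⁻¹dφ (the latter being automatic). -/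
/-- Wirtinger derivative `∂/∂z₁` of a smooth function on `ℂ²`. -/
noncomputable def D1c (f : ℂ × ℂ → ℂ) (z : ℂ × ℂ) : ℂ :=
  (1 / 2 : ℂ) * (fderiv ℝ f z (1, 0) - Complex.I * fderiv ℝ f z (Complex.I, 0))

/-- Wirtinger derivative `∂/∂z₂`. -/
noncomputable def D2c (f : ℂ × ℂ → ℂ) (z : ℂ × ℂ) : ℂ :=
  (1 / 2 : ℂ) * (fderiv ℝ f z (0, 1) - Complex.I * fderiv ℝ f z (0, Complex.I))

/-- Matrix product (matrices as `Fin m → Fin m → ℂ`). -/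
noncomputable def mulM {m : ℕ} (A B : Fin m → Fin m → ℂ) : Fin m → Fin m → ℂ :=
  fun i k => ∑ j : Fin m, A i j * B j k

/-- Entrywise Wirtinger derivatives of a matrix-valued function. -/
noncomputable def D1M {m : ℕ} (Φ : ℂ × ℂ → Fin m → Fin m → ℂ) (z : ℂ × ℂ) :
    Fin m → Fin m → ℂ := fun i j => D1c (fun w => Φ w i j) z
noncomputable def D2M {m : ℕ} (Φ : ℂ × ℂ → Fin m → Fin m → ℂ) (z : ℂ × ℂ) :
    Fin m → Fin m → ℂ := fun i j => D2c (fun w => Φ w i j) z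

/-- `A = φ⁻¹ ∂₁φ` (with `ψ` the pointwise inverse of `φ`). -/
noncomputable def mcA {m : ℕ} (φ ψ : ℂ × ℂ → Fin m → Fin m → ℂ) (z : ℂ × ℂ) :
    Fin m → Fin m → ℂ := mulM (ψ z) (D1M φ z)
/-- `B = φ⁻¹ ∂₂φ`. -/
noncomputable def mcB {m : ℕ} (φ ψ : ℂ × ℂ → Fin m → Fin m → ℂ) (z : ℂ × ℂ) :
    Fin m → Fin m → ℂ := mulM (ψ z) (D2M φ z)


lemma fderiv_cmul (c : ℂ) (f : ℂ × ℂ → ℂ) (z : ℂ × ℂ) :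
    fderiv ℝ (fun w => c * f w) z = c • fderiv ℝ f z := by
  by_cases hc : c = 0
  · simp [hc]
    ext v <;> simp
  by_cases hf : DifferentiableAt ℝ f z
  · exact fderiv_const_mul hf c
  · have hf' : ¬ DifferentiableAt ℝ (fun w => c * f w) z := by
      intro h
      have h2 := h.const_mul c⁻¹
      simp only [← mul_assoc, inv_mul_cancel₀ hc, one_mul] at h2
      exact hf h2
    rw [fderiv_zero_of_not_differentiableAt hf, fderiv_zero_of_not_differentiableAt hf']
    ext v <;> simp

lemma D1c_cmul (c : ℂ) (f : ℂ × ℂ → ℂ) (z : ℂ × ℂ) :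
    D1c (fun w => c * f w) z = c * D1c f z := by
  simp only [D1c, fderiv_cmul, ContinuousLinearMap.smul_apply, smul_eq_mul]
  ring

lemma D2c_cmul (c : ℂ) (f : ℂ × ℂ → ℂ) (z : ℂ × ℂ) :
    D2c (fun w => c * f w) z = c * D2c f z := by
  simp only [D2c, fderiv_cmul, ContinuousLinearMap.smul_apply, smul_eq_mul]
  ring

lemma D1M_smul {m : ℕ} (c : ℂ) (Φ : ℂ × ℂ → Fin m → Fin m → ℂ) (z : ℂ × ℂ) :
    D1M (fun w => c • Φ w) z = c • D1M Φ z := by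
  funext i j
  simpa [D1M, Pi.smul_apply, smul_eq_mul] using D1c_cmul c (fun w => Φ w i j) z

lemma D2M_smul {m : ℕ} (c : ℂ) (Φ : ℂ × ℂ → Fin m → Fin m → ℂ) (z : ℂ × ℂ) :
    D2M (fun w => c • Φ w) z = c • D2M Φ z := by
  funext i j
  simpa [D2M, Pi.smul_apply, smul_eq_mul] using D2c_cmul c (fun w => Φ w i j) z

lemma mulM_smul_smul {m : ℕ} (c d : ℂ) (A B : Fin m → Fin m → ℂ) :
    mulM (c • A) (d • B) = (c * d) • mulM A B := by
  funext i j
  simp only [mulM, Pi.smul_apply, smul_eq_mul, Finset.mul_sum]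
  apply Finset.sum_congr rfl
  intros; ring

/-- for a smooth map `φ : U → GL_m(ℂ)` on a simply connected open
`U ⊆ ℂ²` and `α(λ) = ½(1−1/λ)(φ⁻¹∂₁φ)dz₁ + ½(1−λ)(φ⁻¹∂₂φ)dz₂`, the connection
`d + α(λ)` is flat for every `λ ∈ ℂ*` if and only if `φ` satisfies the harmonic map
equation `∂₁(φ⁻¹∂₂φ) + ∂₂(φ⁻¹∂₁φ) = 0` and the flatness of `d + φ⁻¹dφ`
(the latter being automatic). -/
theorem stmt17 (m : ℕ) (U : Set (ℂ × ℂ)) (hU : IsOpen U)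
    (hsc : SimplyConnectedSpace U)
    (φ ψ : ℂ × ℂ → Fin m → Fin m → ℂ)
    (hφ : ∀ i j, ContDiffOn ℝ (⊤ : ℕ∞) (fun w => φ w i j) U)
    (hψ : ∀ i j, ContDiffOn ℝ (⊤ : ℕ∞) (fun w => ψ w i j) U)
    (hinv : ∀ z ∈ U, mulM (φ z) (ψ z) = fun i j => if i = j then 1 else 0)
    (hinv' : ∀ z ∈ U, mulM (ψ z) (φ z) = fun i j => if i = j then 1 else 0) :
    (∀ lam : ℂ, lam ≠ 0 → ∀ z ∈ U,
        D1M (fun w => ((1 - lam) / 2) • mcB φ ψ w) z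
          - D2M (fun w => ((1 - 1 / lam) / 2) • mcA φ ψ w) z
          + mulM (((1 - 1 / lam) / 2) • mcA φ ψ z) (((1 - lam) / 2) • mcB φ ψ z)
          - mulM (((1 - lam) / 2) • mcB φ ψ z) (((1 - 1 / lam) / 2) • mcA φ ψ z)
          = 0) ↔
    ((∀ z ∈ U, D1M (mcB φ ψ) z + D2M (mcA φ ψ) z = 0) ∧
      (∀ z ∈ U, D1M (mcB φ ψ) z - D2M (mcA φ ψ) z
          + mulM (mcA φ ψ z) (mcB φ ψ z) - mulM (mcB φ ψ z) (mcA φ ψ z) = 0)) := by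
  
  have expand : ∀ (lam : ℂ) (z : ℂ × ℂ) (i j : Fin m),
      (D1M (fun w => ((1 - lam) / 2) • mcB φ ψ w) z
          - D2M (fun w => ((1 - 1 / lam) / 2) • mcA φ ψ w) z
          + mulM (((1 - 1 / lam) / 2) • mcA φ ψ z) (((1 - lam) / 2) • mcB φ ψ z)
          - mulM (((1 - lam) / 2) • mcB φ ψ z) (((1 - 1 / lam) / 2) • mcA φ ψ z)) i j
        = ((1 - lam) / 2) * D1M (mcB φ ψ) z i j
          - ((1 - 1 / lam) / 2) * D2M (mcA φ ψ) z i j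
          + (((1 - 1 / lam) / 2) * ((1 - lam) / 2)) * mulM (mcA φ ψ z) (mcB φ ψ z) i j
          - (((1 - lam) / 2) * ((1 - 1 / lam) / 2)) * mulM (mcB φ ψ z) (mcA φ ψ z) i j := by
    intro lam z i j
    rw [D1M_smul, D2M_smul, mulM_smul_smul, mulM_smul_smul]
    simp [Pi.smul_apply, smul_eq_mul]
  constructor
  · intro h
    constructor
    · intro z hz
      funext i j
      have e1 := congrFun (congrFun (h 2 (by norm_num) z hz) i) j
      have e2 := congrFun (congrFun (h (1/2) (by norm_num) z hz) i) j
      rw [expand] at e1 e2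
      simp only [Pi.zero_apply] at e1 e2
      norm_num at e1 e2
      show D1M (mcB φ ψ) z i j + D2M (mcA φ ψ) z i j = (0 : ℂ)
      linear_combination (-4/3 : ℂ) * e1 + (4/3 : ℂ) * e2
    · intro z hz
      funext i j
      have e3 := congrFun (congrFun (h (-1) (by norm_num) z hz) i) j
      rw [expand] at e3
      simp only [Pi.zero_apply] at e3
      norm_num at e3
      show D1M (mcB φ ψ) z i j - D2M (mcA φ ψ) z i j
          + mulM (mcA φ ψ z) (mcB φ ψ z) i j - mulM (mcB φ ψ z) (mcA φ ψ z) i j = (0 : ℂ)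
      linear_combination e3
  · rintro ⟨h1, h2⟩ lam hlam z hz
    funext i j
    have h1' := congrFun (congrFun (h1 z hz) i) j
    have h2' := congrFun (congrFun (h2 z hz) i) j
    simp only [Pi.add_apply, Pi.sub_apply, Pi.zero_apply] at h1' h2'
    show _ = (0 : ℂ)
    rw [expand]
    have hq : D2M (mcA φ ψ) z i j = - D1M (mcB φ ψ) z i j := by linear_combination h1'
    have hba : mulM (mcB φ ψ z) (mcA φ ψ z) i j
        = mulM (mcA φ ψ z) (mcB φ ψ z) i j + 2 * D1M (mcB φ ψ) z i j := by
      linear_combination - h2' - h1'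
    rw [hq, hba]
    field_simp
    ring
end
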